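/- arXiv:2406.00347 — 3 statements merged into one kernel-verified Lean document; each statement's English description precedes it below -/
import Mathlib

section
/- Let G be a group acting on a type X, let V be an affine space over ℝ (a real vector space viewed as an affine space), let ρ : G →* (V ≃ᵃ[ℝ] V) be a group homomorphism into the affine automorphisms of V, and let φ : X → V be any function. Suppose F : X → Finset G assigns to each x a nonempty finite frame set satisfying the frame-equivariance condition F(g • x) = (F x).image (fun h => g * h) for all g ∈ G and x ∈ X. Define the frame-averaged map Φ : X → V by Φ(x) = the affine combination of the points ρ(h) (φ (h⁻¹ • x)) for h ∈ F(x), each with equal weight 1/|F(x)|. Then Φ is equivariant: Φ(g • x) = ρ(g) (Φ(x)) for every g ∈ G and x ∈ X. -/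
/-!
Reindexing the frame `F (g • x) = g • F x` by `h = g * k` turns each point
`ρ h (φ (h⁻¹ • g • x))` into `ρ g (ρ k (φ (k⁻¹ • x)))`, so the average over `F (g • x)` is the
average of the `ρ g`-images of the points averaged over `F x`. Affine maps preserve
affine combinations whose weights sum to `1`, which for uniform weights is exactly
nonemptiness of the frame.
-/

open Finset

theorem AffineMap.map_centroid {k V P V₂ P₂ ι : Type*} [DivisionRing k] [CharZero k]
    [AddCommGroup V] [Module k V] [AddTorsor V P] [AddCommGroup V₂] [Module k V₂]
    [AddTorsor V₂ P₂] (f : P →ᵃ[k] P₂) {s : Finset ι} (hs : s.Nonempty) (p : ι → P) :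
    f (s.centroid k p) = s.centroid k (f ∘ p) :=
  s.map_affineCombination p _ (s.sum_centroidWeights_eq_one_of_nonempty k hs) f

theorem Finset.centroid_image_mul_left {k V P G : Type*} [DivisionRing k] [AddCommGroup V]
    [Module k V] [AddTorsor V P] [Group G] [DecidableEq G] (s : Finset G) (g : G) (p : G → P) :
    (s.image (g * ·)).centroid k p = s.centroid k (fun h => p (g * h)) := by
  rw [← show s.map (mulLeftEmbedding g) = s.image (g * ·) from map_eq_image _ _, centroid_map]
  rfl

section FrameAveraging

variable {k V P G X : Type*} [DivisionRing k] [AddCommGroup V] [Module k V] [AddTorsor V P]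
  [Group G] [MulAction G X]

noncomputable def frameAverage (ρ : G →* P ≃ᵃ[k] P) (φ : X → P) (F : X → Finset G) (x : X) :
    P :=
  (F x).centroid k (fun h => ρ h (φ (h⁻¹ • x)))

theorem frameAverage_smul [CharZero k] [DecidableEq G] (ρ : G →* P ≃ᵃ[k] P) (φ : X → P)
    {F : X → Finset G} (hne : ∀ x, (F x).Nonempty)
    (hF : ∀ (g : G) (x : X), F (g • x) = (F x).image (g * ·)) (g : G) (x : X) :
    frameAverage ρ φ F (g • x) = ρ g (frameAverage ρ φ F x) := by
  have hpoint (h : G) : ρ (g * h) (φ ((g * h)⁻¹ • g • x)) = ρ g (ρ h (φ (h⁻¹ • x))) := by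
    rw [mul_inv_rev, mul_smul, inv_smul_smul, map_mul, AffineEquiv.coe_mul, Function.comp_apply]
  rw [frameAverage, hF, centroid_image_mul_left]
  simp_rw [hpoint]
  exact ((ρ g).toAffineMap.map_centroid (hne x) _).symm

end FrameAveraging

/-- **Frame averaging is equivariant.**
Let `G` act on `X`, let `V` be a real vector space viewed as an affine space over `ℝ`,
let `ρ : G →* (V ≃ᵃ[ℝ] V)` be a homomorphism into the affine automorphisms of `V`, and
let `φ : X → V` be any function.  If `F : X → Finset G` assigns a nonempty frame set to
each input, and `F` is frame-equivariant, i.e. `F (g • x) = (F x).image (g * ·)`, then the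
frame-averaged map `Φ x = affine combination of ρ h (φ (h⁻¹ • x)) for h ∈ F x, with equal
weights (F x).card⁻¹` is equivariant: `Φ (g • x) = ρ g (Φ x)`. -/
theorem frame_averaging_equivariant
    {G X V : Type*} [Group G] [DecidableEq G] [MulAction G X] [AddCommGroup V] [Module ℝ V]
    (ρ : G →* V ≃ᵃ[ℝ] V) (φ : X → V) (F : X → Finset G)
    (hne : ∀ x : X, (F x).Nonempty)
    (hF : ∀ (g : G) (x : X), F (g • x) = (F x).image (fun h => g * h))
    (Φ : X → V)
    (hΦ : ∀ x : X, Φ x =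
      (F x).affineCombination ℝ (fun h : G => ρ h (φ (h⁻¹ • x)))
        (fun _ : G => ((F x).card : ℝ)⁻¹)) :
    ∀ (g : G) (x : X), Φ (g • x) = ρ g (Φ x) := by
  obtain rfl : Φ = frameAverage ρ φ F := funext hΦ
  exact frameAverage_smul ρ φ hne hF
end

section
/- Let m ≥ 1 and let x : Fin m → EuclideanSpace ℝ (Fin 3) be a point configuration whose covariance matrix Cov(x) has three pairwise distinct eigenvalues. Let F(x) be its frame set and let φ : (Fin m → EuclideanSpace ℝ (Fin 3)) → EuclideanSpace ℝ (Fin 3) be any function. Define the frame-averaged predictor Φ(x) = (1/|F(x)|) · Σ_{(Q,s) ∈ F(x)} (Q.mulVec (φ (fun i => Qᵀ.mulVec (x i − s))) + s). Then Φ is E(3)-equivariant: for every 3×3 real matrix U with U * Uᵀ = 1 and every w ∈ ℝ³, letting f(p) = U.mulVec p + w, one has Φ(fun i => f (x i)) = U.mulVec (Φ(x)) + w. -/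
open Matrix

/-- Reinterpret a plain vector `Fin 3 → ℝ` as a point of `EuclideanSpace ℝ (Fin 3)`
(the identity map on the underlying data). -/
def toE (v : Fin 3 → ℝ) : EuclideanSpace ℝ (Fin 3) := WithLp.toLp 2 v

/-- The centroid of a point configuration. -/
noncomputable def centroid {m : ℕ} (x : Fin m → EuclideanSpace ℝ (Fin 3)) :
    EuclideanSpace ℝ (Fin 3) :=
  (m : ℝ)⁻¹ • ∑ i, x i

/-- The outer product `p pᵀ` of a vector with itself. -/
def outerSq (p : EuclideanSpace ℝ (Fin 3)) : Matrix (Fin 3) (Fin 3) ℝ :=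
  Matrix.of fun a b => p a * p b

/-- The covariance matrix of a point configuration. -/
noncomputable def cov {m : ℕ} (x : Fin m → EuclideanSpace ℝ (Fin 3)) :
    Matrix (Fin 3) (Fin 3) ℝ :=
  (m : ℝ)⁻¹ • ∑ i, outerSq (x i - centroid x)

/-- `lam` lists the eigenvalues of the symmetric matrix `C` in ascending order:
it is monotone and `C` is orthogonally diagonalized with diagonal `lam`. -/
def IsSortedEigs (C : Matrix (Fin 3) (Fin 3) ℝ) (lam : Fin 3 → ℝ) : Prop :=
  Monotone lam ∧ ∃ P : Matrix (Fin 3) (Fin 3) ℝ,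
    P * Pᵀ = 1 ∧ C = P * Matrix.diagonal lam * Pᵀ

/-- The frame set of a point configuration: pairs `(Q, centroid x)` where the `j`-th column
of `Q` is a unit eigenvector of `cov x` for the `j`-th eigenvalue in ascending order. -/
noncomputable def frameSet {m : ℕ} (x : Fin m → EuclideanSpace ℝ (Fin 3)) :
    Set (Matrix (Fin 3) (Fin 3) ℝ × EuclideanSpace ℝ (Fin 3)) :=
  { Qs | Qs.2 = centroid x ∧ ∃ lam : Fin 3 → ℝ, IsSortedEigs (cov x) lam ∧
      ∀ j : Fin 3, ‖toE (Qs.1ᵀ j)‖ = 1 ∧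
        (cov x).mulVec (Qs.1ᵀ j) = lam j • Qs.1ᵀ j }


/-- The frame-averaged predictor: the equally-weighted average over the frame set of the
back-transformed network outputs,
`Φ(x) = |F(x)|⁻¹ • Σ_{(Q,s) ∈ F(x)} (Q (φ (i ↦ Qᵀ (x i − s))) + s)`. -/
noncomputable def frameAvg {m : ℕ}
    (φ : (Fin m → EuclideanSpace ℝ (Fin 3)) → EuclideanSpace ℝ (Fin 3))
    (x : Fin m → EuclideanSpace ℝ (Fin 3)) : EuclideanSpace ℝ (Fin 3) :=
  ((frameSet x).ncard : ℝ)⁻¹ •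
    ∑ᶠ Qs ∈ frameSet x,
      (toE (Qs.1.mulVec (φ fun i => toE (Qs.1ᵀ.mulVec (x i - Qs.2)))) + Qs.2)

/-! An orthogonal motion `p ↦ U p + w` sends the centroid `t` to `U t + w` and the covariance `C`
to `U C Uᵀ`, so `(Q, t) ↦ (U Q, U t + w)` maps the frame set of `x` bijectively onto the frame
set of the moved configuration. Along this bijection the canonicalized input `Qᵀ (x i - t)` of
`φ` is unchanged, so every summand is moved by the same motion, and an affine map commutes with
averaging over a finite nonempty set. The frame set is finite because, the eigenvalues being
simple, each column of a frame is a column of the diagonalizing matrix up to sign. -/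

section Orthogonal

variable {n : Type*} [Fintype n]

lemma transpose_mul_apply_eq_mulVec (A B : Matrix n n ℝ) (j : n) : (A * B)ᵀ j = A *ᵥ Bᵀ j := by
  ext i
  simp [mulVec, dotProduct, mul_apply]

variable [DecidableEq n]

lemma mulVec_dotProduct_mulVec_self {U : Matrix n n ℝ} (hU : Uᵀ * U = 1) (v : n → ℝ) :
    U *ᵥ v ⬝ᵥ U *ᵥ v = v ⬝ᵥ v := by
  rw [dotProduct_mulVec, ← vecMul_transpose, vecMul_vecMul, hU, vecMul_one]

lemma eq_single_of_diagonal_mulVec_eq_smul {lam : n → ℝ} (hlam : Function.Injective lam)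
    {v : n → ℝ} {μ : ℝ} (hv : diagonal lam *ᵥ v = μ • v) {i : n} (hi : v i ≠ 0) :
    v = Pi.single i (v i) := by
  have hcomp : ∀ k, lam k * v k = μ * v k := fun k => by
    simpa [mulVec_diagonal] using congrFun hv k
  have hμ : lam i = μ := mul_right_cancel₀ hi (hcomp i)
  ext k
  rcases eq_or_ne k i with rfl | hk
  · simp
  · rw [Pi.single_eq_of_ne hk]
    by_contra hvk
    exact hk (hlam (mul_right_cancel₀ hvk ((hcomp k).trans (hμ ▸ rfl))))

lemma exists_eq_col_or_eq_neg_col {P : Matrix n n ℝ} (hP : P * Pᵀ = 1) {lam : n → ℝ}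
    (hlam : Function.Injective lam) {q : n → ℝ} (hq : q ⬝ᵥ q = 1) {μ : ℝ}
    (he : (P * diagonal lam * Pᵀ) *ᵥ q = μ • q) : ∃ i, q = Pᵀ i ∨ q = -Pᵀ i := by
  have hPt : Pᵀ * P = 1 := mul_eq_one_comm.mp hP
  obtain ⟨v, rfl⟩ : ∃ v, q = P *ᵥ v := ⟨Pᵀ *ᵥ q, by rw [mulVec_mulVec, hP, one_mulVec]⟩
  rw [mulVec_dotProduct_mulVec_self hPt] at hq
  have hconj : Pᵀ * (P * diagonal lam * Pᵀ * P) = diagonal lam := by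
    rw [Matrix.mul_assoc, hPt, Matrix.mul_one, ← Matrix.mul_assoc, hPt, Matrix.one_mul]
  have hv : diagonal lam *ᵥ v = μ • v := by
    have h := congrArg (Pᵀ *ᵥ ·) he
    simp only [mulVec_mulVec, mulVec_smul, hPt, one_mulVec] at h
    rwa [hconj] at h
  obtain ⟨i, hi⟩ : ∃ i, v i ≠ 0 := by
    by_contra! h
    have h0 : v = 0 := funext h
    simp [h0] at hq
  have hsingle := eq_single_of_diagonal_mulVec_eq_smul hlam hv hi
  have hsq : v i * v i = 1 := by
    rw [hsingle] at hq
    simpa using hq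
  have hcol : P *ᵥ v = v i • Pᵀ i := by
    rw [hsingle, mulVec_single]
    ext k
    simp [mul_comm]
  refine ⟨i, ?_⟩
  rcases mul_self_eq_one_iff.mp hsq with h | h
  · left; simp [hcol, h]
  · right; simp [hcol, h]

end Orthogonal

lemma inv_ncard_smul_finsum_mem_map_add {ι 𝕜 E F : Type*} [DivisionRing 𝕜] [CharZero 𝕜]
    [AddCommGroup E] [Module 𝕜 E] [AddCommGroup F] [Module 𝕜 F] (A : E →ₗ[𝕜] F) (w : F)
    {S : Set ι} (hS : S.Finite) (hne : S.Nonempty) (t : ι → E) :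
    (S.ncard : 𝕜)⁻¹ • ∑ᶠ i ∈ S, (A (t i) + w) = A ((S.ncard : 𝕜)⁻¹ • ∑ᶠ i ∈ S, t i) + w := by
  have hcard : (hS.toFinset.card : 𝕜) ≠ 0 :=
    Nat.cast_ne_zero.mpr (hS.toFinset_nonempty.mpr hne).card_pos.ne'
  rw [finsum_mem_eq_finite_toFinset_sum _ hS, finsum_mem_eq_finite_toFinset_sum _ hS,
    Set.ncard_eq_toFinset_card _ hS, Finset.sum_add_distrib, ← map_sum, Finset.sum_const,
    ← Nat.cast_smul_eq_nsmul 𝕜, smul_add, map_smul, smul_smul, inv_mul_cancel₀ hcard, one_smul]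

lemma norm_toE (v : Fin 3 → ℝ) : ‖toE v‖ = √(v ⬝ᵥ v) := by
  rw [norm_eq_sqrt_real_inner, toE, EuclideanSpace.inner_toLp_toLp, star_trivial]

lemma norm_toE_mulVec {U : Matrix (Fin 3) (Fin 3) ℝ} (hU : Uᵀ * U = 1) (v : Fin 3 → ℝ) :
    ‖toE (U *ᵥ v)‖ = ‖toE v‖ := by
  rw [norm_toE, norm_toE, mulVec_dotProduct_mulVec_self hU]

section Motion

variable (U : Matrix (Fin 3) (Fin 3) ℝ) (w : EuclideanSpace ℝ (Fin 3))

noncomputable def motion (p : EuclideanSpace ℝ (Fin 3)) : EuclideanSpace ℝ (Fin 3) :=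
  toE (U *ᵥ p) + w

noncomputable def frameMotion (Qs : Matrix (Fin 3) (Fin 3) ℝ × EuclideanSpace ℝ (Fin 3)) :
    Matrix (Fin 3) (Fin 3) ℝ × EuclideanSpace ℝ (Fin 3) :=
  (U * Qs.1, motion U w Qs.2)

lemma motion_sub_motion (p q : EuclideanSpace ℝ (Fin 3)) :
    motion U w p - motion U w q = toE (U *ᵥ (p - q : EuclideanSpace ℝ (Fin 3))) := by
  simp only [motion, toE, WithLp.ofLp_sub, mulVec_sub, WithLp.toLp_sub]
  abel

variable {U w}

lemma motion_leftInverse {V : Matrix (Fin 3) (Fin 3) ℝ} (hVU : V * U = 1)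
    {w' : EuclideanSpace ℝ (Fin 3)} (hw : motion V w' w = 0) :
    Function.LeftInverse (motion V w') (motion U w) := by
  intro p
  have hw' : toE (V *ᵥ w) = -w' := eq_neg_of_add_eq_zero_left hw
  simp only [motion, toE, WithLp.ofLp_add, mulVec_add, mulVec_mulVec, hVU, one_mulVec,
    WithLp.toLp_add] at hw' ⊢
  rw [hw']
  simp

lemma frameMotion_leftInverse {V : Matrix (Fin 3) (Fin 3) ℝ} (hVU : V * U = 1)
    {w' : EuclideanSpace ℝ (Fin 3)} (hw : motion V w' w = 0) :
    Function.LeftInverse (frameMotion V w') (frameMotion U w) := fun Qs =>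
  Prod.ext (by simp [frameMotion, ← Matrix.mul_assoc, hVU]) (motion_leftInverse hVU hw Qs.2)

lemma frameMotion_injective (hU : Uᵀ * U = 1) : Function.Injective (frameMotion U w) :=
  (frameMotion_leftInverse hU (w' := -toE (Uᵀ *ᵥ w)) (by simp [motion])).injective

end Motion

section Statistics

variable {m : ℕ} (x : Fin m → EuclideanSpace ℝ (Fin 3)) (U : Matrix (Fin 3) (Fin 3) ℝ)
  (w : EuclideanSpace ℝ (Fin 3))

lemma centroid_motion (hm : m ≠ 0) : centroid (motion U w ∘ x) = motion U w (centroid x) := by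
  have hsum : ∑ i, motion U w (x i) = toLpLin 2 2 U (∑ i, x i) + (m : ℝ) • w := by
    simp [motion, Finset.sum_add_distrib, map_sum, toLpLin_apply, toE, Nat.cast_smul_eq_nsmul]
  have hm' : (m : ℝ) ≠ 0 := Nat.cast_ne_zero.mpr hm
  simp only [centroid, Function.comp_apply, hsum, smul_add, ← map_smul, smul_smul,
    inv_mul_cancel₀ hm', one_smul]
  rfl

lemma outerSq_toE_mulVec (p : EuclideanSpace ℝ (Fin 3)) :
    outerSq (toE (U *ᵥ p)) = U * outerSq p * Uᵀ := by
  have h : ∀ p : EuclideanSpace ℝ (Fin 3), outerSq p = vecMulVec p p := fun _ => rfl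
  rw [h, h, mul_vecMulVec, vecMulVec_mul, vecMul_transpose]
  rfl

lemma cov_motion : cov (motion U w ∘ x) = U * cov x * Uᵀ := by
  rcases eq_or_ne m 0 with rfl | hm
  · simp [cov]
  simp only [cov, centroid_motion x U w hm, Function.comp_apply, motion_sub_motion,
    outerSq_toE_mulVec, ← Finset.sum_mul, ← Finset.mul_sum, Matrix.mul_smul, Matrix.smul_mul]

end Statistics

lemma IsSortedEigs.conj {C : Matrix (Fin 3) (Fin 3) ℝ} {lam : Fin 3 → ℝ} (h : IsSortedEigs C lam)
    {U : Matrix (Fin 3) (Fin 3) ℝ} (hU : U * Uᵀ = 1) : IsSortedEigs (U * C * Uᵀ) lam := by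
  obtain ⟨hmono, P, hP, rfl⟩ := h
  refine ⟨hmono, U * P, ?_, ?_⟩
  · rw [transpose_mul, Matrix.mul_assoc, ← Matrix.mul_assoc P, hP, Matrix.one_mul, hU]
  · simp only [transpose_mul, Matrix.mul_assoc]

section FrameSet

variable {m : ℕ}

lemma frameMotion_mem_frameSet (hm : m ≠ 0) {x : Fin m → EuclideanSpace ℝ (Fin 3)}
    {U : Matrix (Fin 3) (Fin 3) ℝ} (hU : U * Uᵀ = 1) (w : EuclideanSpace ℝ (Fin 3))
    {Qs : Matrix (Fin 3) (Fin 3) ℝ × EuclideanSpace ℝ (Fin 3)} (hQs : Qs ∈ frameSet x) :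
    frameMotion U w Qs ∈ frameSet (motion U w ∘ x) := by
  obtain ⟨hs, lam, hlam, hcols⟩ := hQs
  have hUt : Uᵀ * U = 1 := mul_eq_one_comm.mp hU
  refine ⟨by rw [centroid_motion x U w hm, ← hs]; rfl, lam, cov_motion x U w ▸ hlam.conj hU,
    fun j => ?_⟩
  obtain ⟨hunit, heig⟩ := hcols j
  have hcol := transpose_mul_apply_eq_mulVec U Qs.1 j
  refine ⟨by rw [frameMotion, hcol, norm_toE_mulVec hUt, hunit], ?_⟩
  rw [frameMotion, hcol, cov_motion, mulVec_mulVec, Matrix.mul_assoc, hUt, Matrix.mul_one,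
    ← mulVec_mulVec, heig, mulVec_smul]

lemma frameSet_motion (hm : m ≠ 0) (x : Fin m → EuclideanSpace ℝ (Fin 3))
    {U : Matrix (Fin 3) (Fin 3) ℝ} (hU : U * Uᵀ = 1) (w : EuclideanSpace ℝ (Fin 3)) :
    frameSet (motion U w ∘ x) = frameMotion U w '' frameSet x := by
  have hUt : Uᵀ * U = 1 := mul_eq_one_comm.mp hU
  set w' := -toE (Uᵀ *ᵥ w)
  have hinv : Function.LeftInverse (motion Uᵀ w') (motion U w) :=
    motion_leftInverse hUt (by simp [motion, w'])
  have hinv' : Function.LeftInverse (frameMotion U w) (frameMotion Uᵀ w') :=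
    frameMotion_leftInverse hU (by simp [motion, w', toE, mulVec_neg, mulVec_mulVec, hU])
  refine subset_antisymm ?_
    (Set.image_subset_iff.mpr fun Qs hQs => frameMotion_mem_frameSet hm hU w hQs)
  calc frameSet (motion U w ∘ x)
      = frameMotion U w '' (frameMotion Uᵀ w' '' frameSet (motion U w ∘ x)) :=
        (hinv'.image_image _).symm
    _ ⊆ frameMotion U w '' frameSet x := by
        refine Set.image_mono (Set.image_subset_iff.mpr fun Qs hQs => ?_)
        have h := frameMotion_mem_frameSet hm (by rwa [transpose_transpose]) w' hQs
        rwa [← Function.comp_assoc, hinv.comp_eq_id, Function.id_comp] at h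

lemma frameSet_finite {x : Fin m → EuclideanSpace ℝ (Fin 3)} {lam : Fin 3 → ℝ}
    (hlam : IsSortedEigs (cov x) lam) (hdist : Function.Injective lam) :
    (frameSet x).Finite := by
  obtain ⟨-, P, hP, hC⟩ := hlam
  set cols : Set (Fin 3 → ℝ) := Set.range Pᵀ ∪ Set.range (-Pᵀ)
  have hcols : (Set.univ.pi fun _ : Fin 3 => cols).Finite :=
    Set.Finite.pi fun _ => (Set.finite_range _).union (Set.finite_range _)
  refine ((hcols.preimage transpose_injective.injOn).prod
    (Set.finite_singleton (centroid x))).subset ?_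
  rintro ⟨Q, s⟩ ⟨hs, _, -, hQ⟩
  refine ⟨fun j _ => ?_, hs⟩
  obtain ⟨hunit, heig⟩ := hQ j
  rw [norm_toE, Real.sqrt_eq_one] at hunit
  rw [hC] at heig
  obtain ⟨i, hi | hi⟩ := exists_eq_col_or_eq_neg_col hP hdist hunit heig
  · exact Or.inl ⟨i, hi.symm⟩
  · exact Or.inr ⟨i, hi.symm⟩

lemma frameSet_nonempty {x : Fin m → EuclideanSpace ℝ (Fin 3)} {lam : Fin 3 → ℝ}
    (hlam : IsSortedEigs (cov x) lam) : (frameSet x).Nonempty := by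
  obtain ⟨hmono, P, hP, hC⟩ := hlam
  have hPt : Pᵀ * P = 1 := mul_eq_one_comm.mp hP
  have hCP : cov x * P = P * diagonal lam := by rw [hC, Matrix.mul_assoc, hPt, Matrix.mul_one]
  refine ⟨(P, centroid x), rfl, lam, ⟨hmono, P, hP, hC⟩, fun j => ⟨?_, ?_⟩⟩
  · rw [norm_toE, Real.sqrt_eq_one]
    simpa [mul_apply, dotProduct] using congrFun (congrFun hPt j) j
  · rw [← transpose_mul_apply_eq_mulVec, hCP]
    ext k
    simp [mul_diagonal, mul_comm]

end FrameSet

section FrameTerm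

variable {m : ℕ} (φ : (Fin m → EuclideanSpace ℝ (Fin 3)) → EuclideanSpace ℝ (Fin 3))
  (x : Fin m → EuclideanSpace ℝ (Fin 3))

noncomputable def frameTerm (Qs : Matrix (Fin 3) (Fin 3) ℝ × EuclideanSpace ℝ (Fin 3)) :
    EuclideanSpace ℝ (Fin 3) :=
  toE (Qs.1.mulVec (φ fun i => toE (Qs.1ᵀ.mulVec (x i - Qs.2)))) + Qs.2

lemma frameAvg_eq_frameTerm :
    frameAvg φ x = ((frameSet x).ncard : ℝ)⁻¹ • ∑ᶠ Qs ∈ frameSet x, frameTerm φ x Qs := rfl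

lemma frameTerm_motion {U : Matrix (Fin 3) (Fin 3) ℝ} (hU : Uᵀ * U = 1)
    (w : EuclideanSpace ℝ (Fin 3)) (Qs : Matrix (Fin 3) (Fin 3) ℝ × EuclideanSpace ℝ (Fin 3)) :
    frameTerm φ (motion U w ∘ x) (frameMotion U w Qs) = motion U w (frameTerm φ x Qs) := by
  have hinput : (fun i => toE ((U * Qs.1)ᵀ *ᵥ (motion U w (x i) - motion U w Qs.2))) =
      fun i => toE (Qs.1ᵀ *ᵥ (x i - Qs.2)) := by
    funext i
    rw [← WithLp.ofLp_sub, motion_sub_motion, ← WithLp.ofLp_sub]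
    simp only [toE, WithLp.ofLp_toLp, transpose_mul, mulVec_mulVec, Matrix.mul_assoc, hU,
      Matrix.mul_one]
  simp only [frameTerm, frameMotion, Function.comp_apply, hinput]
  simp only [motion, toE, ← mulVec_mulVec, WithLp.ofLp_add, mulVec_add, WithLp.toLp_add]
  abel

end FrameTerm

/-- **The frame-averaged predictor is E(3)-equivariant.** If the covariance matrix of the
configuration `x` has three pairwise distinct eigenvalues, then for any function `φ` and
any Euclidean motion `p ↦ U p + w` (with `U * Uᵀ = 1`), averaging over the frame set
commutes with the motion: `Φ(i ↦ U (x i) + w) = U (Φ(x)) + w`. -/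
theorem frameAvg_equivariant {m : ℕ} (hm : 1 ≤ m)
    (x : Fin m → EuclideanSpace ℝ (Fin 3))
    (lam : Fin 3 → ℝ) (hlam : IsSortedEigs (cov x) lam) (hdist : Function.Injective lam)
    (φ : (Fin m → EuclideanSpace ℝ (Fin 3)) → EuclideanSpace ℝ (Fin 3))
    (U : Matrix (Fin 3) (Fin 3) ℝ) (hU : U * Uᵀ = 1) (w : EuclideanSpace ℝ (Fin 3)) :
    frameAvg φ (fun i => toE (U.mulVec (x i)) + w) = toE (U.mulVec (frameAvg φ x)) + w := by
  have hUt : Uᵀ * U = 1 := mul_eq_one_comm.mp hU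
  have hinj : Function.Injective (frameMotion U w) := frameMotion_injective hUt
  change frameAvg φ (motion U w ∘ x) = motion U w (frameAvg φ x)
  rw [frameAvg_eq_frameTerm, frameAvg_eq_frameTerm, frameSet_motion (by omega) x hU w,
    Set.ncard_image_of_injective _ hinj, finsum_mem_image hinj.injOn]
  simp only [frameTerm_motion φ x hUt]
  exact inv_ncard_smul_finsum_mem_map_add (toLpLin 2 2 U) w (frameSet_finite hlam hdist)
    (frameSet_nonempty hlam) (frameTerm φ x)
end

section
/- Let m ≥ 1 and let x : Fin m → EuclideanSpace ℝ (Fin 3) be a point configuration whose covariance matrix Cov(x) has three pairwise distinct eigenvalues λ₁ < λ₂ < λ₃. Then the frame set F(x) has exactly 8 elements: for each j the set of unit eigenvectors of Cov(x) with eigenvalue λⱼ is exactly {vⱼ, −vⱼ} for some unit vector vⱼ, so the admissible matrices Q are precisely the eight matrices with columns (±v₁, ±v₂, ±v₃). -/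
open Matrix

/-! Write `cov x = P diag(λ) Pᵀ` with `P` orthogonal. Conjugating by `P` turns an eigenvector
for `λⱼ` into an eigenvector of `diag(λ)`, which is supported on the single coordinate `j` since
the `λᵢ` are distinct; so the unit eigenvectors for `λⱼ` are `±` the `j`-th column of `P`.
The ascending eigenvalue list is the sorted list of roots of the characteristic polynomial, so
every frame uses the same `λ`, and a frame amounts to a choice of sign for each of the three
columns: `2³ = 8` frames. -/

open Polynomial

theorem Monotone.eq_of_map_univ_val_eq {α : Type*} [LinearOrder α] {n : ℕ} {f g : Fin n → α}
    (hf : Monotone f) (hg : Monotone g) (h : Finset.univ.val.map f = Finset.univ.val.map g) :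
    f = g := by
  rw [Fin.univ_val_map, Fin.univ_val_map, Multiset.coe_eq_coe] at h
  exact List.ofFn_injective (h.eq_of_sortedLE (List.sortedLE_ofFn_iff.2 hf)
    (List.sortedLE_ofFn_iff.2 hg))

theorem encard_setOf_transpose_mem {m n α : Type*} [Fintype n] (S : n → Set (m → α)) :
    {Q : Matrix m n α | ∀ j, Qᵀ j ∈ S j}.encard = ∏ j, (S j).encard := by
  have : {Q : Matrix m n α | ∀ j, Qᵀ j ∈ S j} =
      transpose '' (Set.univ.pi S : Set (Matrix n m α)) := by
    ext Q
    refine ⟨fun hQ => ⟨Qᵀ, fun j _ => hQ j, Q.transpose_transpose⟩, ?_⟩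
    rintro ⟨R, hR, rfl⟩ j
    exact hR j trivial
  rw [this]
  exact (transpose_injective.encard_image _).trans Set.encard_pi_eq_prod_encard

theorem EuclideanSpace.norm_eq_one_iff_dotProduct_self {n : Type*} [Fintype n]
    (u : EuclideanSpace ℝ n) : ‖u‖ = 1 ↔ u.ofLp ⬝ᵥ u.ofLp = 1 := by
  rw [← pow_eq_one_iff_of_nonneg (norm_nonneg u) two_ne_zero, EuclideanSpace.real_norm_sq_eq]
  simp only [dotProduct, sq]

def unitEigenvectors {n : Type*} [Fintype n] (A : Matrix n n ℝ) (μ : ℝ) : Set (n → ℝ) :=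
  {u | u ⬝ᵥ u = 1 ∧ A *ᵥ u = μ • u}

section OrthogonalConjugate

variable {n : Type*} [Fintype n] [DecidableEq n] {P : Matrix n n ℝ} {d : n → ℝ}

theorem roots_charpoly_conj_diagonal (hP : P * Pᵀ = 1) :
    (P * diagonal d * Pᵀ).charpoly.roots = Finset.univ.val.map d := by
  rw [charpoly_mul_comm, ← Matrix.mul_assoc, mul_eq_one_comm.mp hP, Matrix.one_mul,
    charpoly_diagonal, Finset.prod_eq_multiset_prod]
  simpa using roots_multiset_prod_X_sub_C (Finset.univ.val.map d)

theorem dotProduct_transpose_self (hP : P * Pᵀ = 1) (j : n) : Pᵀ j ⬝ᵥ Pᵀ j = 1 := by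
  have h := congrFun₂ (mul_eq_one_comm.mp hP : Pᵀ * P = 1) j j
  rwa [mul_apply', one_apply_eq] at h

theorem conj_diagonal_mulVec_transpose (hP : P * Pᵀ = 1) (j : n) :
    (P * diagonal d * Pᵀ) *ᵥ Pᵀ j = d j • Pᵀ j := by
  have hcol : Pᵀ j = P *ᵥ Pi.single j 1 := (P.mulVec_single_one j).symm
  rw [hcol, mulVec_mulVec, Matrix.mul_assoc, Matrix.mul_assoc, mul_eq_one_comm.mp hP,
    Matrix.mul_one, ← mulVec_mulVec, diagonal_mulVec_single, ← mulVec_smul, mul_one,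
    ← Pi.single_smul, smul_eq_mul, mul_one]

theorem eq_single_of_diagonal_mulVec_eq_smul_s6 (hd : Function.Injective d) {c : n → ℝ} {μ : ℝ}
    (hc : diagonal d *ᵥ c = μ • c) {k : n} (hk : c k ≠ 0) :
    μ = d k ∧ c = Pi.single k (c k) := by
  have hentry : ∀ i, (d i - μ) * c i = 0 := fun i => by
    have := congrFun hc i
    rw [mulVec_diagonal, Pi.smul_apply, smul_eq_mul] at this
    rw [sub_mul, this, sub_self]
  have hμ : μ = d k := (sub_eq_zero.mp ((mul_eq_zero.mp (hentry k)).resolve_right hk)).symm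
  refine ⟨hμ, funext fun i => ?_⟩
  rcases eq_or_ne i k with rfl | hik
  · rw [Pi.single_eq_same]
  · rw [Pi.single_eq_of_ne hik]
    refine (mul_eq_zero.mp (hentry i)).resolve_left ?_
    rw [hμ]
    exact sub_ne_zero.mpr (hd.ne hik)

theorem exists_eq_smul_transpose_of_conj_diagonal_mulVec_eq_smul (hP : P * Pᵀ = 1)
    (hd : Function.Injective d) {u : n → ℝ} {μ : ℝ}
    (hu : (P * diagonal d * Pᵀ) *ᵥ u = μ • u) (hu0 : u ≠ 0) :
    ∃ (k : n) (a : ℝ), μ = d k ∧ u = a • Pᵀ k := by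
  set c := Pᵀ *ᵥ u
  have hPc : P *ᵥ c = u := by rw [mulVec_mulVec, hP, one_mulVec]
  have hc : diagonal d *ᵥ c = μ • c := by
    rw [← mulVec_smul, ← hu, mulVec_mulVec, mulVec_mulVec, ← Matrix.mul_assoc,
      ← Matrix.mul_assoc, mul_eq_one_comm.mp hP, Matrix.one_mul]
  obtain ⟨k, hk⟩ : ∃ k, c k ≠ 0 := by
    by_contra! h
    exact hu0 (by rw [← hPc, show c = 0 from funext h, mulVec_zero])
  obtain ⟨hμ, hck⟩ := eq_single_of_diagonal_mulVec_eq_smul_s6 hd hc hk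
  refine ⟨k, c k, hμ, ?_⟩
  calc u = P *ᵥ Pi.single k (c k) := by rw [← hck, hPc]
    _ = c k • Pᵀ k := by
      rw [← mul_one (c k), ← smul_eq_mul, Pi.single_smul', mulVec_smul, mulVec_single_one,
        smul_eq_mul, mul_one]
      rfl

theorem unitEigenvectors_conj_diagonal (hP : P * Pᵀ = 1) (hd : Function.Injective d) (j : n) :
    unitEigenvectors (P * diagonal d * Pᵀ) (d j) = {Pᵀ j, -Pᵀ j} := by
  ext u
  constructor
  · rintro ⟨hunit, heig⟩
    have hu0 : u ≠ 0 := by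
      rintro rfl
      simp at hunit
    obtain ⟨k, a, hjk, rfl⟩ :=
      exists_eq_smul_transpose_of_conj_diagonal_mulVec_eq_smul hP hd heig hu0
    obtain rfl := hd hjk
    have ha : a * a = 1 := by
      rwa [smul_dotProduct, dotProduct_smul, dotProduct_transpose_self hP, smul_eq_mul,
        smul_eq_mul, mul_one] at hunit
    rcases mul_self_eq_one_iff.mp ha with rfl | rfl
    · exact Or.inl (one_smul _ _)
    · exact Or.inr (neg_one_smul _ _)
  · rintro (rfl | rfl)
    · exact ⟨dotProduct_transpose_self hP j, conj_diagonal_mulVec_transpose hP j⟩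
    · exact ⟨by rw [neg_dotProduct_neg, dotProduct_transpose_self hP],
        by rw [mulVec_neg, conj_diagonal_mulVec_transpose hP, smul_neg]⟩

end OrthogonalConjugate

theorem IsSortedEigs.unique {C : Matrix (Fin 3) (Fin 3) ℝ} {lam lam' : Fin 3 → ℝ}
    (h : IsSortedEigs C lam) (h' : IsSortedEigs C lam') : lam = lam' := by
  obtain ⟨hmono, P, hP, rfl⟩ := h
  obtain ⟨hmono', P', hP', hC⟩ := h'
  refine hmono.eq_of_map_univ_val_eq hmono' ?_
  rw [← roots_charpoly_conj_diagonal hP, ← roots_charpoly_conj_diagonal hP', hC]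

theorem norm_toE_eq_one_iff (v : Fin 3 → ℝ) : ‖toE v‖ = 1 ↔ v ⬝ᵥ v = 1 :=
  EuclideanSpace.norm_eq_one_iff_dotProduct_self (toE v)

theorem frameSet_eq {m : ℕ} {x : Fin m → EuclideanSpace ℝ (Fin 3)} {lam : Fin 3 → ℝ}
    (hlam : IsSortedEigs (cov x) lam) :
    frameSet x = (·, centroid x) '' {Q | ∀ j, Qᵀ j ∈ unitEigenvectors (cov x) (lam j)} := by
  ext ⟨Q, t⟩
  simp only [frameSet, unitEigenvectors, norm_toE_eq_one_iff, Set.mem_ofPred_eq, Set.mem_image,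
    Prod.mk.injEq]
  constructor
  · rintro ⟨rfl, lam', hlam', hQ⟩
    obtain rfl := hlam.unique hlam'
    exact ⟨Q, hQ, rfl, rfl⟩
  · rintro ⟨Q, hQ, rfl, rfl⟩
    exact ⟨rfl, lam, hlam, hQ⟩

theorem frameSet_ncard_eq_eight_general {m : ℕ} (x : Fin m → EuclideanSpace ℝ (Fin 3))
    (lam : Fin 3 → ℝ) (hlam : IsSortedEigs (cov x) lam) (hdist : StrictMono lam) :
    (∀ j : Fin 3, ∃ v : EuclideanSpace ℝ (Fin 3), ‖v‖ = 1 ∧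
      {u : EuclideanSpace ℝ (Fin 3) | ‖u‖ = 1 ∧ (cov x).mulVec u = lam j • (u : Fin 3 → ℝ)}
        = {v, -v}) ∧
    (frameSet x).ncard = 8 := by
  obtain ⟨P, hP, hC⟩ := hlam.2
  have hunit (j : Fin 3) : unitEigenvectors (cov x) (lam j) = {Pᵀ j, -Pᵀ j} := by
    rw [hC]
    exact unitEigenvectors_conj_diagonal hP hdist.injective j
  have hneg (j : Fin 3) : Pᵀ j ≠ -Pᵀ j := fun h => by
    have hj := dotProduct_transpose_self hP j
    rw [self_eq_neg.mp h, zero_dotProduct] at hj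
    exact zero_ne_one hj
  refine ⟨fun j => ⟨toE (Pᵀ j), (norm_toE_eq_one_iff _).2 (dotProduct_transpose_self hP j), ?_⟩,
    ?_⟩
  · ext u
    have hu := Set.ext_iff.mp (hunit j) u.ofLp
    simp only [unitEigenvectors, Set.mem_ofPred_eq, Set.mem_insert_iff,
      Set.mem_singleton_iff] at hu ⊢
    rw [EuclideanSpace.norm_eq_one_iff_dotProduct_self, hu]
    simp only [toE, ← WithLp.toLp_neg, WithLp.ext_iff]
  · rw [frameSet_eq hlam, Set.ncard_def, (Prod.mk_left_injective _).encard_image,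
      encard_setOf_transpose_mem]
    simp_rw [hunit, Set.encard_pair (hneg _)]
    rfl

/-- **The frame set has exactly 8 elements.** If the covariance matrix of `x` has three
pairwise distinct eigenvalues `λ₁ < λ₂ < λ₃`, then for each `j` the set of unit
eigenvectors of `Cov(x)` with eigenvalue `λⱼ` is exactly `{vⱼ, -vⱼ}` for some unit vector
`vⱼ`, and consequently the frame set has exactly 8 elements (the matrices with columns
`(±v₁, ±v₂, ±v₃)`). -/
theorem frameSet_ncard_eq_eight {m : ℕ} (hm : 1 ≤ m) (x : Fin m → EuclideanSpace ℝ (Fin 3))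
    (lam : Fin 3 → ℝ) (hlam : IsSortedEigs (cov x) lam) (hdist : StrictMono lam) :
    (∀ j : Fin 3, ∃ v : EuclideanSpace ℝ (Fin 3), ‖v‖ = 1 ∧
      {u : EuclideanSpace ℝ (Fin 3) | ‖u‖ = 1 ∧ (cov x).mulVec u = lam j • (u : Fin 3 → ℝ)}
        = {v, -v}) ∧
    (frameSet x).ncard = 8 :=
  frameSet_ncard_eq_eight_general x lam hlam hdist
end
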